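/- arXiv:0807.4107 — 10 statements merged into one kernel-verified Lean document; each statement's English description precedes it below -/
import Mathlib

section
/- Let t, r, φ, z : ℝ → ℝ be a geodesic of Gödel's universe. Then for every ρ₁, ρ₂ ∈ ℝ the quantity P_{ρ₁,ρ₂}(u) = (ρ₂ + ρ₁·cosh(r(u))²/2)·t'(u) + ((ρ₁·cosh(r(u))² + 4ρ₂)·sinh(r(u))²/(2√2))·φ'(u) is constant in u; that is, P_{ρ₁,ρ₂}(u) = P_{ρ₁,ρ₂}(u₀) for all u, u₀ ∈ ℝ. -/
open Real

/-!
`P_{ρ₁,ρ₂} = (ρ₂ + ρ₁/2) E + ρ₁/(2√2) L`, where `E = t' + √2 sinh² r φ'` and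
`L = √2 sinh² r t' + (sinh⁴ r - sinh² r) φ'` are the Noether charges of the Killing fields `∂_t`
and `∂_φ` of the Gödel metric. Multiplied by `cosh r`, the derivatives of `E` and `L` are
combinations of the `t`- and `φ`-equations (the `t`-equation cleared of its denominator
`cosh r`) and of `cosh² r - sinh² r = 1`, hence vanish.
-/

/-- A function is twice differentiable (everywhere on ℝ). -/
def TwiceDiff (f : ℝ → ℝ) : Prop :=
  Differentiable ℝ f ∧ Differentiable ℝ (deriv f)

/-- The four geodesic differential equations of Gödel's universe in
cylindrical coordinates. -/
def GodelGeodesicEqns (t r φ z : ℝ → ℝ) : Prop :=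
  ∀ u : ℝ,
    (deriv (deriv t) u + 4 * Real.tanh (r u) * deriv t u * deriv r u
      + 2 * Real.sqrt 2 * (Real.sinh (r u) ^ 3 / Real.cosh (r u)) * deriv φ u * deriv r u = 0)
    ∧ (deriv (deriv r) u
      + 2 * Real.sqrt 2 * Real.sinh (r u) * Real.cosh (r u) * deriv t u * deriv φ u
      + Real.sinh (r u) * Real.cosh (r u) * (2 * Real.cosh (r u) ^ 2 - 3) * (deriv φ u) ^ 2 = 0)
    ∧ (deriv (deriv φ) u * Real.sinh (r u) * Real.cosh (r u)
      - 2 * Real.sqrt 2 * deriv t u * deriv r u + 2 * deriv φ u * deriv r u = 0)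
    ∧ (deriv (deriv z) u = 0)

/-- The conserved momentum quantity `P_{ρ₁,ρ₂}` along a curve. -/
noncomputable def godelP (t r φ : ℝ → ℝ) (ρ₁ ρ₂ : ℝ) (u : ℝ) : ℝ :=
  (ρ₂ + ρ₁ * Real.cosh (r u) ^ 2 / 2) * deriv t u
    + ((ρ₁ * Real.cosh (r u) ^ 2 + 4 * ρ₂) * Real.sinh (r u) ^ 2 / (2 * Real.sqrt 2)) * deriv φ u

/-- The conserved quantity `C₁` along a curve. -/
noncomputable def godelC1 (t r φ : ℝ → ℝ) (u : ℝ) : ℝ :=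
  -(Real.sqrt 2) * Real.cos (φ u) * Real.sinh (2 * r u) * deriv t u
    + Real.sin (φ u) * deriv r u
    - Real.cos (φ u) * (Real.cosh (2 * r u) - 2) * Real.sinh (2 * r u) / 2 * deriv φ u

/-- The conserved quantity `C₂` along a curve. -/
noncomputable def godelC2 (t r φ : ℝ → ℝ) (u : ℝ) : ℝ :=
  Real.sqrt 2 * Real.sin (φ u) * Real.sinh (2 * r u) * deriv t u
    + Real.cos (φ u) * deriv r u
    + Real.sin (φ u) * (Real.cosh (2 * r u) - 2) * Real.sinh (2 * r u) / 2 * deriv φ u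

variable {t r φ z : ℝ → ℝ}

noncomputable def godelEnergy (t r φ : ℝ → ℝ) (u : ℝ) : ℝ :=
  deriv t u + √2 * sinh (r u) ^ 2 * deriv φ u

noncomputable def godelAngularMomentum (t r φ : ℝ → ℝ) (u : ℝ) : ℝ :=
  √2 * sinh (r u) ^ 2 * deriv t u + (sinh (r u) ^ 4 - sinh (r u) ^ 2) * deriv φ u

theorem godelP_eq_energy_add_angularMomentum (ρ₁ ρ₂ u : ℝ) :
    godelP t r φ ρ₁ ρ₂ u =
      (ρ₂ + ρ₁ / 2) * godelEnergy t r φ u + ρ₁ / (2 * √2) * godelAngularMomentum t r φ u := by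
  rw [godelP, godelEnergy, godelAngularMomentum, cosh_sq']
  field_simp
  linear_combination -(2 * ρ₂ + ρ₁) * sinh (r u) ^ 2 * deriv φ u * sq_sqrt zero_le_two

section Derivatives

variable {r' t'' φ'' v : ℝ} (hr : HasDerivAt r r' v) (ht : HasDerivAt (deriv t) t'' v)
  (hφ : HasDerivAt (deriv φ) φ'' v)
include hr ht hφ

theorem hasDerivAt_godelEnergy :
    HasDerivAt (godelEnergy t r φ)
      (t'' + 2 * √2 * sinh (r v) * cosh (r v) * r' * deriv φ v + √2 * sinh (r v) ^ 2 * φ'') v := by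
  refine (ht.add (((hr.sinh.fun_pow 2).const_mul √2).mul hφ)).congr_deriv ?_
  ring

theorem hasDerivAt_godelAngularMomentum :
    HasDerivAt (godelAngularMomentum t r φ)
      (2 * √2 * sinh (r v) * cosh (r v) * r' * deriv t v + √2 * sinh (r v) ^ 2 * t''
        + (4 * sinh (r v) ^ 3 - 2 * sinh (r v)) * cosh (r v) * r' * deriv φ v
        + (sinh (r v) ^ 4 - sinh (r v) ^ 2) * φ'') v := by
  refine ((((hr.sinh.fun_pow 2).const_mul √2).mul ht).add
    (((hr.sinh.fun_pow 4).fun_sub (hr.sinh.fun_pow 2)).mul hφ)).congr_deriv ?_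
  ring

end Derivatives

theorem eq_of_forall_hasDerivAt_zero {f : ℝ → ℝ} (hf : ∀ x, HasDerivAt f 0 x) (x y : ℝ) :
    f x = f y :=
  is_const_of_deriv_eq_zero (fun x => (hf x).differentiableAt) (fun x => (hf x).deriv) x y

namespace GodelGeodesicEqns

variable (h : GodelGeodesicEqns t r φ z) (ht : Differentiable ℝ (deriv t))
  (hr : Differentiable ℝ r) (hφ : Differentiable ℝ (deriv φ))
include h

theorem cosh_mul_time_eqn (u : ℝ) :
    cosh (r u) * deriv (deriv t) u + 4 * sinh (r u) * deriv t u * deriv r u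
      + 2 * √2 * sinh (r u) ^ 3 * deriv φ u * deriv r u = 0 := by
  have hc : cosh (r u) ≠ 0 := (cosh_pos _).ne'
  have e := congrArg (cosh (r u) * ·) (h u).1
  rw [tanh_eq_sinh_div_cosh] at e
  field_simp at e
  linear_combination e

include ht hr hφ

theorem godelEnergy_eq (u u₀ : ℝ) : godelEnergy t r φ u = godelEnergy t r φ u₀ := by
  refine eq_of_forall_hasDerivAt_zero (fun v => ?_) u u₀
  refine (hasDerivAt_godelEnergy (hr v).hasDerivAt (ht v).hasDerivAt (hφ v).hasDerivAt).congr_deriv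
    (mul_left_cancel₀ (cosh_pos (r v)).ne' ?_)
  linear_combination h.cosh_mul_time_eqn v + √2 * sinh (r v) * (h v).2.2.1
    + 2 * √2 * sinh (r v) * deriv r v * deriv φ v * cosh_sq_sub_sinh_sq (r v)
    + 2 * sinh (r v) * deriv t v * deriv r v * sq_sqrt zero_le_two

theorem godelAngularMomentum_eq (u u₀ : ℝ) :
    godelAngularMomentum t r φ u = godelAngularMomentum t r φ u₀ := by
  refine eq_of_forall_hasDerivAt_zero (fun v => ?_) u u₀
  refine (hasDerivAt_godelAngularMomentum (hr v).hasDerivAt (ht v).hasDerivAt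
    (hφ v).hasDerivAt).congr_deriv (mul_left_cancel₀ (cosh_pos (r v)).ne' ?_)
  linear_combination √2 * sinh (r v) ^ 2 * h.cosh_mul_time_eqn v
    + (sinh (r v) ^ 3 - sinh (r v)) * (h v).2.2.1
    + (2 * √2 * sinh (r v) * deriv t v + (4 * sinh (r v) ^ 3 - 2 * sinh (r v)) * deriv φ v)
      * deriv r v * cosh_sq_sub_sinh_sq (r v)
    - 2 * sinh (r v) ^ 5 * deriv φ v * deriv r v * sq_sqrt zero_le_two

end GodelGeodesicEqns

theorem godel_momentum_conserved_general (t r φ z : ℝ → ℝ)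
    (ht : TwiceDiff t) (hr : TwiceDiff r) (hφ : TwiceDiff φ)
    (hgeo : GodelGeodesicEqns t r φ z) :
    ∀ (ρ₁ ρ₂ : ℝ) (u u₀ : ℝ), godelP t r φ ρ₁ ρ₂ u = godelP t r φ ρ₁ ρ₂ u₀ := by
  intro ρ₁ ρ₂ u u₀
  rw [godelP_eq_energy_add_angularMomentum, godelP_eq_energy_add_angularMomentum,
    hgeo.godelEnergy_eq ht.2 hr.1 hφ.2 u u₀, hgeo.godelAngularMomentum_eq ht.2 hr.1 hφ.2 u u₀]

/-- Along a geodesic of Gödel's universe, the momentum quantity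
`P_{ρ₁,ρ₂}` is conserved for every `ρ₁ ρ₂ : ℝ`. -/
theorem godel_momentum_conserved (t r φ z : ℝ → ℝ)
    (ht : TwiceDiff t) (hr : TwiceDiff r) (hφ : TwiceDiff φ) (hz : TwiceDiff z)
    (hrpos : ∀ u, 0 < r u)
    (hgeo : GodelGeodesicEqns t r φ z) :
    ∀ (ρ₁ ρ₂ : ℝ) (u u₀ : ℝ), godelP t r φ ρ₁ ρ₂ u = godelP t r φ ρ₁ ρ₂ u₀ :=
  godel_momentum_conserved_general t r φ z ht hr hφ hgeo
end

section
/- Let t, r, φ, z : ℝ → ℝ be a geodesic of Gödel's universe. Then the quantity C₁(u) = −√2·cos(φ(u))·sinh(2r(u))·t'(u) + sin(φ(u))·r'(u) − (cos(φ(u))·(cosh(2r(u)) − 2)·sinh(2r(u))/2)·φ'(u) is constant in u; that is, C₁(u) = C₁(u₀) for all u, u₀ ∈ ℝ. -/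
/-!
Differentiating `C₁` along an arbitrary curve gives
`sin φ · E_r − cos φ · (2√2 sinh r · cosh r · E_t + (cosh 2r − 2) · E_φ)`,
where `E_t, E_r, E_φ` are the left-hand sides of the three non-trivial geodesic equations;
this is an identity valid for every curve. Along a geodesic all three vanish, so `C₁' = 0`.
-/

open Real

-- The `t`-equation multiplied by `cosh r`, which clears the `tanh` and the division.
noncomputable def godelResidualT (t r φ : ℝ → ℝ) (u : ℝ) : ℝ :=
  cosh (r u) * deriv (deriv t) u + 4 * sinh (r u) * deriv t u * deriv r u
    + 2 * √2 * sinh (r u) ^ 3 * deriv φ u * deriv r u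

noncomputable def godelResidualR (t r φ : ℝ → ℝ) (u : ℝ) : ℝ :=
  deriv (deriv r) u + 2 * √2 * sinh (r u) * cosh (r u) * deriv t u * deriv φ u
    + sinh (r u) * cosh (r u) * (2 * cosh (r u) ^ 2 - 3) * deriv φ u ^ 2

noncomputable def godelResidualPhi (t r φ : ℝ → ℝ) (u : ℝ) : ℝ :=
  deriv (deriv φ) u * sinh (r u) * cosh (r u)
    - 2 * √2 * deriv t u * deriv r u + 2 * deriv φ u * deriv r u

theorem GodelGeodesicEqns.residuals_eq_zero {t r φ z : ℝ → ℝ} (h : GodelGeodesicEqns t r φ z)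
    (u : ℝ) :
    godelResidualT t r φ u = 0 ∧ godelResidualR t r φ u = 0 ∧ godelResidualPhi t r φ u = 0 := by
  obtain ⟨hT, hR, hPhi, -⟩ := h u
  refine ⟨?_, hR, hPhi⟩
  have hc : cosh (r u) ≠ 0 := (cosh_pos (r u)).ne'
  rw [tanh_eq_sinh_div_cosh] at hT
  field_simp at hT
  unfold godelResidualT
  linear_combination hT

theorem hasDerivAt_godelC1 {t r φ : ℝ → ℝ} {u : ℝ} (ht' : DifferentiableAt ℝ (deriv t) u)
    (hr : DifferentiableAt ℝ r u) (hr' : DifferentiableAt ℝ (deriv r) u)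
    (hφ : DifferentiableAt ℝ φ u) (hφ' : DifferentiableAt ℝ (deriv φ) u) :
    HasDerivAt (godelC1 t r φ)
      (sin (φ u) * godelResidualR t r φ u
        - cos (φ u) * (2 * √2 * sinh (r u) * godelResidualT t r φ u
          + (cosh (2 * r u) - 2) * godelResidualPhi t r φ u)) u := by
  have h2r : HasDerivAt (fun v => 2 * r v) (2 * deriv r u) u := hr.hasDerivAt.const_mul 2
  have H := ((((hφ.hasDerivAt.cos.const_mul (-√2)).mul h2r.sinh).mul ht'.hasDerivAt).add
    (hφ.hasDerivAt.sin.mul hr'.hasDerivAt)).sub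
      ((((hφ.hasDerivAt.cos.mul (h2r.cosh.sub_const 2)).mul h2r.sinh).div_const 2).mul
        hφ'.hasDerivAt)
  refine H.congr_deriv ?_
  simp only [godelResidualT, godelResidualR, godelResidualPhi, sinh_two_mul, cosh_two_mul, cosh_sq,
    Pi.mul_apply]
  linear_combination (4 * cos (φ u) * sinh (r u) ^ 4 * deriv φ u * deriv r u) * sq_sqrt zero_le_two
    - (4 * cos (φ u) * sinh (r u) ^ 2 * deriv φ u * deriv r u) * cosh_sq_sub_sinh_sq (r u)

theorem godel_C1_conserved_general (t r φ z : ℝ → ℝ)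
    (ht : TwiceDiff t) (hr : TwiceDiff r) (hφ : TwiceDiff φ)
    (hgeo : GodelGeodesicEqns t r φ z) :
    ∀ u u₀ : ℝ, godelC1 t r φ u = godelC1 t r φ u₀ := by
  have hC1 : ∀ u, HasDerivAt (godelC1 t r φ) 0 u := fun u => by
    obtain ⟨hT, hR, hPhi⟩ := hgeo.residuals_eq_zero u
    simpa [hT, hR, hPhi] using hasDerivAt_godelC1 (ht.2 u) (hr.1 u) (hr.2 u) (hφ.1 u) (hφ.2 u)
  exact fun u u₀ => is_const_of_deriv_eq_zero (fun v => (hC1 v).differentiableAt)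
    (fun v => (hC1 v).deriv) u u₀

/-- Along a geodesic of Gödel's universe, the quantity `C₁` is conserved. -/
theorem godel_C1_conserved (t r φ z : ℝ → ℝ)
    (ht : TwiceDiff t) (hr : TwiceDiff r) (hφ : TwiceDiff φ) (hz : TwiceDiff z)
    (hrpos : ∀ u, 0 < r u)
    (hgeo : GodelGeodesicEqns t r φ z) :
    ∀ u u₀ : ℝ, godelC1 t r φ u = godelC1 t r φ u₀ :=
  godel_C1_conserved_general t r φ z ht hr hφ hgeo
end

section
/- Let t, r, φ, z : ℝ → ℝ be a geodesic of Gödel's universe. Then the quantity C₂(u) = √2·sin(φ(u))·sinh(2r(u))·t'(u) + cos(φ(u))·r'(u) + (sin(φ(u))·(cosh(2r(u)) − 2)·sinh(2r(u))/2)·φ'(u) is constant in u; that is, C₂(u) = C₂(u₀) for all u, u₀ ∈ ℝ. -/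
/-!
Differentiating `C₂` along an arbitrary curve gives, by the chain rule, an expression in the
position `(r, φ)` and the first and second derivatives of `t, r, φ`. The second derivatives enter
linearly, with coefficients `√2 sin φ sinh 2r`, `cos φ`, `sin φ (cosh 2r - 2) sinh 2r / 2`;
matching them fixes the multipliers `2√2 sin φ sinh r`, `cos φ`, `(2 cosh² r - 3) sin φ` of the
three geodesic equations (the `t`-equation multiplied by `cosh r`). What remains after subtracting
this combination vanishes identically by `cosh² r - sinh² r = 1` and `√2² = 2`, so on a geodesic
`C₂` has zero derivative and is constant.
-/

open Real

noncomputable def godelC2Rate (φ r t₁ r₁ φ₁ t₂ r₂ φ₂ : ℝ) : ℝ :=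
  √2 * (cos φ * φ₁ * sinh (2 * r) + 2 * sin φ * cosh (2 * r) * r₁) * t₁
    + √2 * sin φ * sinh (2 * r) * t₂
    - sin φ * φ₁ * r₁ + cos φ * r₂
    + (cos φ * φ₁ * (cosh (2 * r) - 2) * sinh (2 * r) / 2
        + sin φ * (sinh (2 * r) ^ 2 + (cosh (2 * r) - 2) * cosh (2 * r)) * r₁) * φ₁
    + sin φ * (cosh (2 * r) - 2) * sinh (2 * r) / 2 * φ₂

theorem godelC2Rate_eq_zero {φ r t₁ r₁ φ₁ t₂ r₂ φ₂ : ℝ}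
    (h_t : t₂ + 4 * tanh r * t₁ * r₁ + 2 * √2 * (sinh r ^ 3 / cosh r) * φ₁ * r₁ = 0)
    (h_r : r₂ + 2 * √2 * sinh r * cosh r * t₁ * φ₁
      + sinh r * cosh r * (2 * cosh r ^ 2 - 3) * φ₁ ^ 2 = 0)
    (h_φ : φ₂ * sinh r * cosh r - 2 * √2 * t₁ * r₁ + 2 * φ₁ * r₁ = 0) :
    godelC2Rate φ r t₁ r₁ φ₁ t₂ r₂ φ₂ = 0 := by
  have h_t' : cosh r * t₂ + 4 * sinh r * t₁ * r₁ + 2 * √2 * sinh r ^ 3 * φ₁ * r₁ = 0 := by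
    rw [tanh_eq_sinh_div_cosh] at h_t
    field_simp at h_t
    linear_combination h_t
  have hc : cosh r ^ 2 - sinh r ^ 2 = 1 := cosh_sq_sub_sinh_sq r
  have hq : √2 ^ 2 = 2 := sq_sqrt zero_le_two
  rw [godelC2Rate, sinh_two_mul, cosh_two_mul]
  linear_combination cos φ * h_r + 2 * √2 * sinh r * sin φ * h_t'
    + (2 * cosh r ^ 2 - 3) * sin φ * h_φ
    + (6 * √2 * sin φ * r₁ * t₁ - cos φ * φ₁ ^ 2 * sinh r * cosh r - sin φ * sinh r * cosh r * φ₂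
      + sin φ * φ₁ * r₁ * (cosh r ^ 2 + 7 * sinh r ^ 2 - 5)) * hc
    - 4 * sinh r ^ 4 * sin φ * φ₁ * r₁ * hq

theorem hasDerivAt_godelC2 {t r φ : ℝ → ℝ} {u : ℝ} (hr : DifferentiableAt ℝ r u)
    (hφ : DifferentiableAt ℝ φ u) (ht' : DifferentiableAt ℝ (deriv t) u)
    (hr' : DifferentiableAt ℝ (deriv r) u) (hφ' : DifferentiableAt ℝ (deriv φ) u) :
    HasDerivAt (godelC2 t r φ)
      (godelC2Rate (φ u) (r u) (deriv t u) (deriv r u) (deriv φ u)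
        (deriv (deriv t) u) (deriv (deriv r) u) (deriv (deriv φ) u)) u := by
  have h_2r := hr.hasDerivAt.const_mul 2
  have h_sin := (hasDerivAt_sin (φ u)).comp u hφ.hasDerivAt
  have h_cos := (hasDerivAt_cos (φ u)).comp u hφ.hasDerivAt
  have h_sinh := (hasDerivAt_sinh (2 * r u)).comp u h_2r
  have h_cosh := (hasDerivAt_cosh (2 * r u)).comp u h_2r
  have h_t_term := ((h_sin.const_mul √2).mul h_sinh).mul ht'.hasDerivAt
  have h_r_term := h_cos.mul hr'.hasDerivAt
  have h_φ_term := (((h_sin.mul (h_cosh.sub_const 2)).mul h_sinh).div_const 2).mul hφ'.hasDerivAt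
  refine ((h_t_term.add h_r_term).add h_φ_term).congr_deriv ?_
  simp only [godelC2Rate, Pi.mul_apply, Function.comp_apply]
  ring

theorem godel_C2_conserved_general (t r φ z : ℝ → ℝ)
    (ht : TwiceDiff t) (hr : TwiceDiff r) (hφ : TwiceDiff φ)
    (hgeo : GodelGeodesicEqns t r φ z) :
    ∀ u u₀ : ℝ, godelC2 t r φ u = godelC2 t r φ u₀ := by
  have h_C2 : ∀ u, HasDerivAt (godelC2 t r φ) 0 u := fun u => by
    obtain ⟨h_t, h_r, h_φ, -⟩ := hgeo u
    simpa only [godelC2Rate_eq_zero h_t h_r h_φ] using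
      hasDerivAt_godelC2 (hr.1 u) (hφ.1 u) (ht.2 u) (hr.2 u) (hφ.2 u)
  exact is_const_of_deriv_eq_zero (fun u => (h_C2 u).differentiableAt) fun u => (h_C2 u).deriv

/-- Along a geodesic of Gödel's universe, the quantity `C₂` is conserved. -/
theorem godel_C2_conserved (t r φ z : ℝ → ℝ)
    (ht : TwiceDiff t) (hr : TwiceDiff r) (hφ : TwiceDiff φ) (hz : TwiceDiff z)
    (hrpos : ∀ u, 0 < r u)
    (hgeo : GodelGeodesicEqns t r φ z) :
    ∀ u u₀ : ℝ, godelC2 t r φ u = godelC2 t r φ u₀ :=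
  godel_C2_conserved_general t r φ z ht hr hφ hgeo
end

section
/- Let t, r, φ, z : ℝ → ℝ be twice-differentiable functions with r(u) > 0 for all u. Suppose that the functions u ↦ P_{0,1}(u), u ↦ P_{2,0}(u), u ↦ C₁(u), u ↦ C₂(u), and u ↦ z'(u) are all constant on ℝ. Then (t, r, φ, z) is a geodesic of Gödel's universe, i.e. it satisfies the four geodesic differential equations of Gödel's universe at every u. -/
/-!
The derivatives of `P_{0,1}` and `P_{2,0}` are linear in `(t'', φ'')` with determinant
proportional to `(sinh r · cosh r)²`, so once `r > 0` their vanishing is equivalent to the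
`t`- and `φ`-equations. The left side of the radial equation is
`sin φ · C₁' + cos φ · C₂'`.
-/

open Real

lemma deriv_eq_zero_of_forall_eq {f : ℝ → ℝ} (hf : ∀ u u₀, f u = f u₀) (u : ℝ) :
    deriv f u = 0 := by
  rw [show f = fun _ => f 0 from funext fun v => hf v 0, deriv_const]

section GodelGeodesic

variable (t r φ : ℝ → ℝ)

-- The left-hand sides of the `t`-, `r`- and `φ`-equations of `GodelGeodesicEqns`.
noncomputable def godelGeodesicT (u : ℝ) : ℝ :=
  deriv (deriv t) u + 4 * tanh (r u) * deriv t u * deriv r u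
    + 2 * √2 * (sinh (r u) ^ 3 / cosh (r u)) * deriv φ u * deriv r u

noncomputable def godelGeodesicR (u : ℝ) : ℝ :=
  deriv (deriv r) u + 2 * √2 * sinh (r u) * cosh (r u) * deriv t u * deriv φ u
    + sinh (r u) * cosh (r u) * (2 * cosh (r u) ^ 2 - 3) * deriv φ u ^ 2

noncomputable def godelGeodesicPhi (u : ℝ) : ℝ :=
  deriv (deriv φ) u * sinh (r u) * cosh (r u)
    - 2 * √2 * deriv t u * deriv r u + 2 * deriv φ u * deriv r u

lemma godelP_zero_one :
    godelP t r φ 0 1 = fun u => deriv t u + √2 * sinh (r u) ^ 2 * deriv φ u := by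
  funext u
  have h2 : √2 * √2 = 2 := mul_self_sqrt zero_le_two
  unfold godelP
  field_simp
  linear_combination (-2 * sinh (r u) ^ 2 * deriv φ u) * h2

lemma godelP_two_zero :
    godelP t r φ 2 0 = fun u =>
      cosh (r u) ^ 2 * (deriv t u + √2 / 2 * sinh (r u) ^ 2 * deriv φ u) := by
  funext u
  have h2 : √2 * √2 = 2 := mul_self_sqrt zero_le_two
  unfold godelP
  field_simp
  linear_combination (-cosh (r u) ^ 2 * sinh (r u) ^ 2 * deriv φ u) * h2

variable {t r φ} {u : ℝ}

lemma hasDerivAt_godelP_zero_one (hr : DifferentiableAt ℝ r u)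
    (ht' : DifferentiableAt ℝ (deriv t) u) (hφ' : DifferentiableAt ℝ (deriv φ) u) :
    HasDerivAt (godelP t r φ 0 1)
      (deriv (deriv t) u + √2 * (2 * sinh (r u) * cosh (r u) * deriv r u * deriv φ u
        + sinh (r u) ^ 2 * deriv (deriv φ) u)) u := by
  rw [godelP_zero_one]
  refine (ht'.hasDerivAt.add
    ((hr.hasDerivAt.sinh.pow 2).const_mul √2 |>.mul hφ'.hasDerivAt)).congr_deriv ?_
  simp only [Pi.pow_apply]
  ring

lemma hasDerivAt_godelP_two_zero (hr : DifferentiableAt ℝ r u)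
    (ht' : DifferentiableAt ℝ (deriv t) u) (hφ' : DifferentiableAt ℝ (deriv φ) u) :
    HasDerivAt (godelP t r φ 2 0)
      (2 * sinh (r u) * cosh (r u) * deriv r u
          * (deriv t u + √2 / 2 * sinh (r u) ^ 2 * deriv φ u)
        + cosh (r u) ^ 2 * (deriv (deriv t) u + √2 / 2
          * (2 * sinh (r u) * cosh (r u) * deriv r u * deriv φ u
            + sinh (r u) ^ 2 * deriv (deriv φ) u))) u := by
  rw [godelP_two_zero]
  refine ((hr.hasDerivAt.cosh.pow 2).mul (ht'.hasDerivAt.add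
    ((hr.hasDerivAt.sinh.pow 2).const_mul (√2 / 2) |>.mul hφ'.hasDerivAt))).congr_deriv ?_
  simp only [Pi.pow_apply, Pi.mul_apply, Pi.add_apply]
  ring

lemma cosh_sq_mul_godelGeodesicT (hr : DifferentiableAt ℝ r u)
    (ht' : DifferentiableAt ℝ (deriv t) u) (hφ' : DifferentiableAt ℝ (deriv φ) u) :
    cosh (r u) ^ 2 * godelGeodesicT t r φ u
      = 2 * deriv (godelP t r φ 2 0) u - cosh (r u) ^ 2 * deriv (godelP t r φ 0 1) u := by
  rw [(hasDerivAt_godelP_zero_one hr ht' hφ').deriv,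
    (hasDerivAt_godelP_two_zero hr ht' hφ').deriv, godelGeodesicT, tanh_eq_sinh_div_cosh]
  field_simp
  ring

lemma sqrt_two_mul_sinh_mul_cosh_mul_godelGeodesicPhi (hr : DifferentiableAt ℝ r u)
    (ht' : DifferentiableAt ℝ (deriv t) u) (hφ' : DifferentiableAt ℝ (deriv φ) u) :
    √2 * sinh (r u) * cosh (r u) * godelGeodesicPhi t r φ u
      = 2 * cosh (r u) ^ 2 * deriv (godelP t r φ 0 1) u - 2 * deriv (godelP t r φ 2 0) u := by
  rw [(hasDerivAt_godelP_zero_one hr ht' hφ').deriv,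
    (hasDerivAt_godelP_two_zero hr ht' hφ').deriv, godelGeodesicPhi]
  have h2 : √2 * √2 = 2 := mul_self_sqrt zero_le_two
  linear_combination (-2 * sinh (r u) * cosh (r u) * deriv t u * deriv r u) * h2
    - (2 * √2 * sinh (r u) * cosh (r u) * deriv r u * deriv φ u) * cosh_sq (r u)

lemma godelGeodesicR_eq_sin_mul_deriv_godelC1_add_cos_mul_deriv_godelC2
    (hφ : DifferentiableAt ℝ φ u) (hr : DifferentiableAt ℝ r u)
    (ht' : DifferentiableAt ℝ (deriv t) u) (hr' : DifferentiableAt ℝ (deriv r) u)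
    (hφ' : DifferentiableAt ℝ (deriv φ) u) :
    godelGeodesicR t r φ u
      = sin (φ u) * deriv (godelC1 t r φ) u + cos (φ u) * deriv (godelC2 t r φ) u := by
  have H2r : HasDerivAt (fun v => 2 * r v) (2 * deriv r u) u := hr.hasDerivAt.const_mul 2
  have HC1 : HasDerivAt (godelC1 t r φ) _ u :=
    (((hφ.hasDerivAt.cos.const_mul (-√2)).mul H2r.sinh).mul ht'.hasDerivAt
      |>.add (hφ.hasDerivAt.sin.mul hr'.hasDerivAt)).sub
    ((((hφ.hasDerivAt.cos.mul (H2r.cosh.sub_const 2)).mul H2r.sinh).div_const 2).mul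
      hφ'.hasDerivAt)
  have HC2 : HasDerivAt (godelC2 t r φ) _ u :=
    (((hφ.hasDerivAt.sin.const_mul √2).mul H2r.sinh).mul ht'.hasDerivAt
      |>.add (hφ.hasDerivAt.cos.mul hr'.hasDerivAt)).add
    ((((hφ.hasDerivAt.sin.mul (H2r.cosh.sub_const 2)).mul H2r.sinh).div_const 2).mul
      hφ'.hasDerivAt)
  rw [HC1.deriv, HC2.deriv, godelGeodesicR]
  simp only [Pi.mul_apply, sinh_two_mul, cosh_two_mul]
  linear_combination (-(deriv (deriv r) u
      + 2 * √2 * sinh (r u) * cosh (r u) * deriv t u * deriv φ u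
      + sinh (r u) * cosh (r u) * (sinh (r u) ^ 2 + cosh (r u) ^ 2 - 2) * deriv φ u ^ 2))
      * sin_sq_add_cos_sq (φ u)
    + (sinh (r u) * cosh (r u) * deriv φ u ^ 2) * cosh_sq (r u)

end GodelGeodesic

theorem godel_conserved_implies_geodesic_general (t r φ z : ℝ → ℝ)
    (ht : TwiceDiff t) (hr : TwiceDiff r) (hφ : TwiceDiff φ)
    (hrpos : ∀ u, 0 < r u)
    (hP01 : ∀ u u₀ : ℝ, godelP t r φ 0 1 u = godelP t r φ 0 1 u₀)
    (hP20 : ∀ u u₀ : ℝ, godelP t r φ 2 0 u = godelP t r φ 2 0 u₀)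
    (hC1 : ∀ u u₀ : ℝ, godelC1 t r φ u = godelC1 t r φ u₀)
    (hC2 : ∀ u u₀ : ℝ, godelC2 t r φ u = godelC2 t r φ u₀)
    (hz' : ∀ u u₀ : ℝ, deriv z u = deriv z u₀) :
    GodelGeodesicEqns t r φ z := by
  intro u
  have hr₁ := hr.1 u
  have ht₂ := ht.2 u
  have hφ₂ := hφ.2 u
  have hT := cosh_sq_mul_godelGeodesicT hr₁ ht₂ hφ₂
  have hΦ := sqrt_two_mul_sinh_mul_cosh_mul_godelGeodesicPhi hr₁ ht₂ hφ₂
  have hR := godelGeodesicR_eq_sin_mul_deriv_godelC1_add_cos_mul_deriv_godelC2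
    (hφ.1 u) hr₁ ht₂ (hr.2 u) hφ₂
  simp only [deriv_eq_zero_of_forall_eq hP01, deriv_eq_zero_of_forall_eq hP20,
    deriv_eq_zero_of_forall_eq hC1, deriv_eq_zero_of_forall_eq hC2, mul_zero, sub_zero,
    add_zero] at hT hΦ hR
  have hsinh : 0 < sinh (r u) := sinh_pos_iff.mpr (hrpos u)
  refine ⟨?_, hR, ?_, deriv_eq_zero_of_forall_eq hz' u⟩
  · exact (mul_eq_zero.mp hT).resolve_left (by positivity)
  · exact (mul_eq_zero.mp hΦ).resolve_left (by positivity)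

/-- If `P_{0,1}`, `P_{2,0}`, `C₁`, `C₂` and `z'` are constant along a
twice-differentiable curve with positive radial coordinate, then the curve is a
geodesic of Gödel's universe. -/
theorem godel_conserved_implies_geodesic (t r φ z : ℝ → ℝ)
    (ht : TwiceDiff t) (hr : TwiceDiff r) (hφ : TwiceDiff φ) (hz : TwiceDiff z)
    (hrpos : ∀ u, 0 < r u)
    (hP01 : ∀ u u₀ : ℝ, godelP t r φ 0 1 u = godelP t r φ 0 1 u₀)
    (hP20 : ∀ u u₀ : ℝ, godelP t r φ 2 0 u = godelP t r φ 2 0 u₀)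
    (hC1 : ∀ u u₀ : ℝ, godelC1 t r φ u = godelC1 t r φ u₀)
    (hC2 : ∀ u u₀ : ℝ, godelC2 t r φ u = godelC2 t r φ u₀)
    (hz' : ∀ u u₀ : ℝ, deriv z u = deriv z u₀) :
    GodelGeodesicEqns t r φ z :=
  godel_conserved_implies_geodesic_general t r φ z ht hr hφ hrpos hP01 hP20 hC1 hC2 hz'
end

section
/- Let t, r, φ, z : ℝ → ℝ be a geodesic of Gödel's universe, and fix u₀ ∈ ℝ. Set A = P_{2,0}(u₀) and B = P_{0,1}(u₀). Then for every u ∈ ℝ, t'(u) = 2A/cosh(r(u))² − B. -/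
open Real

/-! Every `P_{ρ₁,ρ₂}` is a first integral of the geodesic equations, and pointwise
`t' = 2 P_{2,0} / cosh² r - P_{0,1}` for any curve; evaluating both first integrals at `u₀`
gives the formula. -/

lemma hasDerivAt_godelP_of_geodesic {t r φ z : ℝ → ℝ} (ht : Differentiable ℝ (deriv t))
    (hr : Differentiable ℝ r) (hφ : Differentiable ℝ (deriv φ))
    (hgeo : GodelGeodesicEqns t r φ z) (ρ₁ ρ₂ u : ℝ) :
    HasDerivAt (godelP t r φ ρ₁ ρ₂) 0 u := by
  obtain ⟨ht_eq, -, hφ_eq, -⟩ := hgeo u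
  have hcosh := (hr u).hasDerivAt.cosh
  have hsinh := (hr u).hasDerivAt.sinh
  have H := (((hcosh.pow 2).const_mul ρ₁).div_const 2 |>.const_add ρ₂).mul (ht u).hasDerivAt
    |>.add (((((hcosh.pow 2).const_mul ρ₁).add_const (4 * ρ₂)).mul (hsinh.pow 2)).div_const
      (2 * √2) |>.mul (hφ u).hasDerivAt)
  refine H.congr_deriv ?_
  have hc : cosh (r u) ≠ 0 := (cosh_pos _).ne'
  have hs : √2 ^ 2 = 2 := sq_sqrt (by norm_num)
  have hcs := cosh_sq (r u)
  rw [tanh_eq_sinh_div_cosh] at ht_eq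
  field_simp at ht_eq
  simp only [Pi.pow_apply, Pi.mul_apply, Nat.cast_ofNat]
  field_simp
  apply mul_left_cancel₀ hc
  linear_combination 2 * √2 * (ρ₂ + ρ₁ * cosh (r u) ^ 2 / 2) * ht_eq
    + (ρ₁ * cosh (r u) ^ 2 + 4 * ρ₂) * sinh (r u) * hφ_eq
    + 2 * (ρ₁ * cosh (r u) ^ 2 + 4 * ρ₂) * sinh (r u) * deriv r u * deriv φ u * hcs
    - 2 * (ρ₁ * cosh (r u) ^ 2 + 2 * ρ₂) * sinh (r u) ^ 3 * deriv r u * deriv φ u * hs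

lemma godelP_eq_of_geodesic {t r φ z : ℝ → ℝ} (ht : Differentiable ℝ (deriv t))
    (hr : Differentiable ℝ r) (hφ : Differentiable ℝ (deriv φ))
    (hgeo : GodelGeodesicEqns t r φ z) (ρ₁ ρ₂ u v : ℝ) :
    godelP t r φ ρ₁ ρ₂ u = godelP t r φ ρ₁ ρ₂ v :=
  have hP := hasDerivAt_godelP_of_geodesic ht hr hφ hgeo ρ₁ ρ₂
  is_const_of_deriv_eq_zero (fun x ↦ (hP x).differentiableAt) (fun x ↦ (hP x).deriv) u v

lemma deriv_eq_two_mul_godelP_div_sub_godelP (t r φ : ℝ → ℝ) (u : ℝ) :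
    deriv t u = 2 * godelP t r φ 2 0 u / cosh (r u) ^ 2 - godelP t r φ 0 1 u := by
  have hc : cosh (r u) ≠ 0 := (cosh_pos _).ne'
  have hs : √2 ≠ 0 := by positivity
  unfold godelP
  field_simp
  ring

theorem godel_tdot_formula_general (t r φ z : ℝ → ℝ)
    (ht : TwiceDiff t) (hr : TwiceDiff r) (hφ : TwiceDiff φ)
    (hgeo : GodelGeodesicEqns t r φ z)
    (u₀ : ℝ) (A B : ℝ)
    (hA : A = godelP t r φ 2 0 u₀) (hB : B = godelP t r φ 0 1 u₀) :
    ∀ u : ℝ, deriv t u = 2 * A / Real.cosh (r u) ^ 2 - B := by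
  intro u
  have hP := godelP_eq_of_geodesic ht.2 hr.1 hφ.2 hgeo
  rw [hA, hB, ← hP 2 0 u, ← hP 0 1 u]
  exact deriv_eq_two_mul_godelP_div_sub_godelP t r φ u

/-- Along a geodesic, `t' = 2A/cosh(r)² − B` where `A = P_{2,0}(u₀)` and
`B = P_{0,1}(u₀)`. -/
theorem godel_tdot_formula (t r φ z : ℝ → ℝ)
    (ht : TwiceDiff t) (hr : TwiceDiff r) (hφ : TwiceDiff φ) (hz : TwiceDiff z)
    (hrpos : ∀ u, 0 < r u)
    (hgeo : GodelGeodesicEqns t r φ z)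
    (u₀ : ℝ) (A B : ℝ)
    (hA : A = godelP t r φ 2 0 u₀) (hB : B = godelP t r φ 0 1 u₀) :
    ∀ u : ℝ, deriv t u = 2 * A / Real.cosh (r u) ^ 2 - B :=
  godel_tdot_formula_general t r φ z ht hr hφ hgeo u₀ A B hA hB
end

section
/- Let t, r, φ, z : ℝ → ℝ be a geodesic of Gödel's universe, and fix u₀ ∈ ℝ. Set A = P_{2,0}(u₀) and B = P_{0,1}(u₀). Then for every u ∈ ℝ, φ'(u) = (√2/sinh(r(u))²)·(B − A/cosh(r(u))²). -/
open Real

/-! Each `P_{ρ₁,ρ₂}` is a first integral of the geodesic equations, and the combination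
`P_{0,1} - P_{2,0} / cosh² r = sinh² r · φ' / √2` contains no `t'`. -/

section GodelMomentum

variable {t r φ z : ℝ → ℝ}

theorem godelP_zero_one_sub_godelP_two_zero_div (u : ℝ) :
    godelP t r φ 0 1 u - godelP t r φ 2 0 u / cosh (r u) ^ 2
      = sinh (r u) ^ 2 / √2 * deriv φ u := by
  have hcosh : cosh (r u) ≠ 0 := (cosh_pos _).ne'
  have hsqrt : (√2 : ℝ) ≠ 0 := by positivity
  simp only [godelP]
  field_simp
  ring

theorem GodelGeodesicEqns.hasDerivAt_godelP (hgeo : GodelGeodesicEqns t r φ z)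
    (hr : Differentiable ℝ r) (ht' : Differentiable ℝ (deriv t))
    (hφ' : Differentiable ℝ (deriv φ)) (ρ₁ ρ₂ u : ℝ) :
    HasDerivAt (godelP t r φ ρ₁ ρ₂) 0 u := by
  have hR := (hr u).hasDerivAt
  have hC := hR.cosh
  have hS := hR.sinh
  have ha := (((hC.pow 2).const_mul ρ₁).div_const 2).const_add ρ₂
  have hb := ((((hC.pow 2).const_mul ρ₁).add_const (4 * ρ₂)).mul (hS.pow 2)).div_const
    (2 * √2)
  refine ((ha.mul (ht' u).hasDerivAt).add (hb.mul (hφ' u).hasDerivAt)).congr_deriv ?_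
  obtain ⟨hE₁, -, hE₃, -⟩ := hgeo u
  have hcosh : cosh (r u) ≠ 0 := (cosh_pos _).ne'
  have hsqrt : (√2 : ℝ) ≠ 0 := by positivity
  rw [tanh_eq_sinh_div_cosh] at hE₁
  simp only [Pi.pow_apply, Pi.mul_apply]
  field_simp
  field_simp at hE₁
  have hsqrt_sq : √2 ^ 2 = 2 := sq_sqrt zero_le_two
  have hpyth := cosh_sq_sub_sinh_sq (r u)
  -- `cosh r · P'`, cleared of denominators, is a combination of the first and third equations.
  apply mul_left_cancel₀ hcosh
  linear_combination √2 * (2 * ρ₂ + ρ₁ * cosh (r u) ^ 2) * hE₁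
    + sinh (r u) * (ρ₁ * cosh (r u) ^ 2 + 4 * ρ₂) * hE₃
    - 2 * (2 * ρ₂ + ρ₁ * cosh (r u) ^ 2) * sinh (r u) ^ 3 * deriv r u * deriv φ u * hsqrt_sq
    + 2 * sinh (r u) * deriv r u * deriv φ u * (ρ₁ * cosh (r u) ^ 2 + 4 * ρ₂) * hpyth

theorem GodelGeodesicEqns.godelP_eq (hgeo : GodelGeodesicEqns t r φ z)
    (hr : Differentiable ℝ r) (ht' : Differentiable ℝ (deriv t))
    (hφ' : Differentiable ℝ (deriv φ)) (ρ₁ ρ₂ u v : ℝ) :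
    godelP t r φ ρ₁ ρ₂ u = godelP t r φ ρ₁ ρ₂ v :=
  have hP := hgeo.hasDerivAt_godelP hr ht' hφ' ρ₁ ρ₂
  is_const_of_deriv_eq_zero (fun w ↦ (hP w).differentiableAt) (fun w ↦ (hP w).deriv) u v

end GodelMomentum

theorem godel_phidot_formula_general (t r φ z : ℝ → ℝ)
    (ht : TwiceDiff t) (hr : TwiceDiff r) (hφ : TwiceDiff φ)
    (hrpos : ∀ u, 0 < r u)
    (hgeo : GodelGeodesicEqns t r φ z)
    (u₀ : ℝ) (A B : ℝ)
    (hA : A = godelP t r φ 2 0 u₀) (hB : B = godelP t r φ 0 1 u₀) :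
    ∀ u : ℝ, deriv φ u
      = Real.sqrt 2 / Real.sinh (r u) ^ 2 * (B - A / Real.cosh (r u) ^ 2) := by
  intro u
  have hsinh : sinh (r u) ≠ 0 := (sinh_pos_iff.2 (hrpos u)).ne'
  have hP := hgeo.godelP_eq hr.1 ht.2 hφ.2
  rw [hA, hB, hP 2 0 u₀ u, hP 0 1 u₀ u, godelP_zero_one_sub_godelP_two_zero_div]
  field_simp

/-- Along a geodesic, `φ' = (√2/sinh(r)²)·(B − A/cosh(r)²)` where
`A = P_{2,0}(u₀)` and `B = P_{0,1}(u₀)`. -/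
theorem godel_phidot_formula (t r φ z : ℝ → ℝ)
    (ht : TwiceDiff t) (hr : TwiceDiff r) (hφ : TwiceDiff φ) (hz : TwiceDiff z)
    (hrpos : ∀ u, 0 < r u)
    (hgeo : GodelGeodesicEqns t r φ z)
    (u₀ : ℝ) (A B : ℝ)
    (hA : A = godelP t r φ 2 0 u₀) (hB : B = godelP t r φ 0 1 u₀) :
    ∀ u : ℝ, deriv φ u
      = Real.sqrt 2 / Real.sinh (r u) ^ 2 * (B - A / Real.cosh (r u) ^ 2) :=
  godel_phidot_formula_general t r φ z ht hr hφ hrpos hgeo u₀ A B hA hB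
end

section
/- Let t, r, φ, z : ℝ → ℝ be a geodesic of Gödel's universe, fix u₀ ∈ ℝ, and set c₁ = C₁(u₀), c₂ = C₂(u₀). Then for every u ∈ ℝ, r'(u) = c₁·sin(φ(u)) + c₂·cos(φ(u)). -/
open Real

/-! Along a geodesic, `r'' = -φ' W` and `W' = φ' r'` for `W = godelW t r φ`, so the vector
`(r', W)` turns with angular velocity `φ'`. Rotating it back by `φ` gives the constant vector
`(C₂, -C₁)`, and rotating that forward by `φ` recovers `r'`. -/

theorem hasDerivAt_sin_mul_sub_cos_mul_of_rotating {f g θ : ℝ → ℝ} {x ω : ℝ}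
    (hf : HasDerivAt f (-(ω * g x)) x) (hg : HasDerivAt g (ω * f x) x) (hθ : HasDerivAt θ ω x) :
    HasDerivAt (fun y => sin (θ y) * f y - cos (θ y) * g y) 0 x :=
  ((hθ.sin.mul hf).sub (hθ.cos.mul hg)).congr_deriv (by ring)

theorem hasDerivAt_cos_mul_add_sin_mul_of_rotating {f g θ : ℝ → ℝ} {x ω : ℝ}
    (hf : HasDerivAt f (-(ω * g x)) x) (hg : HasDerivAt g (ω * f x) x) (hθ : HasDerivAt θ ω x) :
    HasDerivAt (fun y => cos (θ y) * f y + sin (θ y) * g y) 0 x :=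
  ((hθ.cos.mul hf).add (hθ.sin.mul hg)).congr_deriv (by ring)

noncomputable def godelW (t r φ : ℝ → ℝ) (u : ℝ) : ℝ :=
  √2 * sinh (2 * r u) * deriv t u + (cosh (2 * r u) - 2) * sinh (2 * r u) / 2 * deriv φ u

theorem godelC1_eq (t r φ : ℝ → ℝ) :
    godelC1 t r φ = fun u => sin (φ u) * deriv r u - cos (φ u) * godelW t r φ u := by
  ext u
  simp only [godelC1, godelW]
  ring

theorem godelC2_eq (t r φ : ℝ → ℝ) :
    godelC2 t r φ = fun u => cos (φ u) * deriv r u + sin (φ u) * godelW t r φ u := by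
  ext u
  simp only [godelC2, godelW]
  ring

namespace GodelGeodesicEqns

variable {t r φ z : ℝ → ℝ}

theorem deriv_deriv_r (hgeo : GodelGeodesicEqns t r φ z) (u : ℝ) :
    deriv (deriv r) u = -(deriv φ u * godelW t r φ u) := by
  obtain ⟨-, h2, -, -⟩ := hgeo u
  rw [godelW, cosh_two_mul, sinh_two_mul]
  linear_combination h2 - sinh (r u) * cosh (r u) * deriv φ u ^ 2 * cosh_sq (r u)

theorem hasDerivAt_godelW (ht : TwiceDiff t) (hr : TwiceDiff r) (hφ : TwiceDiff φ)
    (hgeo : GodelGeodesicEqns t r φ z) (u : ℝ) :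
    HasDerivAt (godelW t r φ) (deriv φ u * deriv r u) u := by
  obtain ⟨h1, -, h3, -⟩ := hgeo u
  have h1' : cosh (r u) * deriv (deriv t) u + 4 * sinh (r u) * deriv t u * deriv r u
      + 2 * √2 * sinh (r u) ^ 3 * deriv φ u * deriv r u = 0 := by
    rw [tanh_eq_sinh_div_cosh] at h1
    field_simp at h1
    linear_combination h1
  have h2r : HasDerivAt (fun x => 2 * r x) (2 * deriv r u) u :=
    (hr.1 u).hasDerivAt.const_mul 2
  refine (((h2r.sinh.const_mul √2).mul (ht.2 u).hasDerivAt).add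
    ((((h2r.cosh.sub_const 2).mul h2r.sinh).div_const 2).mul (hφ.2 u).hasDerivAt)).congr_deriv ?_
  rw [Pi.mul_apply, cosh_two_mul, sinh_two_mul]
  linear_combination 2 * √2 * sinh (r u) * h1'
    + (cosh (r u) ^ 2 + sinh (r u) ^ 2 - 2) * h3
    + (4 * √2 * deriv t u * deriv r u
      + (cosh (r u) ^ 2 + 7 * sinh (r u) ^ 2 - 3) * deriv φ u * deriv r u) * cosh_sq (r u)
    - 4 * sinh (r u) ^ 4 * deriv φ u * deriv r u * sq_sqrt (zero_le_two : (0 : ℝ) ≤ 2)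

theorem hasDerivAt_godelC1 (ht : TwiceDiff t) (hr : TwiceDiff r) (hφ : TwiceDiff φ)
    (hgeo : GodelGeodesicEqns t r φ z) (u : ℝ) : HasDerivAt (godelC1 t r φ) 0 u := by
  rw [godelC1_eq]
  refine hasDerivAt_sin_mul_sub_cos_mul_of_rotating ?_ (hgeo.hasDerivAt_godelW ht hr hφ u)
    (hφ.1 u).hasDerivAt
  exact hgeo.deriv_deriv_r u ▸ (hr.2 u).hasDerivAt

theorem hasDerivAt_godelC2 (ht : TwiceDiff t) (hr : TwiceDiff r) (hφ : TwiceDiff φ)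
    (hgeo : GodelGeodesicEqns t r φ z) (u : ℝ) : HasDerivAt (godelC2 t r φ) 0 u := by
  rw [godelC2_eq]
  refine hasDerivAt_cos_mul_add_sin_mul_of_rotating ?_ (hgeo.hasDerivAt_godelW ht hr hφ u)
    (hφ.1 u).hasDerivAt
  exact hgeo.deriv_deriv_r u ▸ (hr.2 u).hasDerivAt

end GodelGeodesicEqns

theorem godel_rdot_formula_general (t r φ z : ℝ → ℝ)
    (ht : TwiceDiff t) (hr : TwiceDiff r) (hφ : TwiceDiff φ)
    (hgeo : GodelGeodesicEqns t r φ z)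
    (u₀ : ℝ) (c₁ c₂ : ℝ)
    (hc₁ : c₁ = godelC1 t r φ u₀) (hc₂ : c₂ = godelC2 t r φ u₀) :
    ∀ u : ℝ, deriv r u = c₁ * Real.sin (φ u) + c₂ * Real.cos (φ u) := by
  intro u
  have conserved : ∀ C : ℝ → ℝ, (∀ x, HasDerivAt C 0 x) → C u₀ = C u := fun C hC =>
    is_const_of_deriv_eq_zero (fun x => (hC x).differentiableAt) (fun x => (hC x).deriv) u₀ u
  rw [hc₁, hc₂, conserved _ (hgeo.hasDerivAt_godelC1 ht hr hφ),
    conserved _ (hgeo.hasDerivAt_godelC2 ht hr hφ), godelC1_eq, godelC2_eq]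
  linear_combination -deriv r u * sin_sq_add_cos_sq (φ u)

/-- Along a geodesic, `r' = c₁·sin φ + c₂·cos φ` with `c₁ = C₁(u₀)`,
`c₂ = C₂(u₀)`. -/
theorem godel_rdot_formula (t r φ z : ℝ → ℝ)
    (ht : TwiceDiff t) (hr : TwiceDiff r) (hφ : TwiceDiff φ) (hz : TwiceDiff z)
    (hrpos : ∀ u, 0 < r u)
    (hgeo : GodelGeodesicEqns t r φ z)
    (u₀ : ℝ) (c₁ c₂ : ℝ)
    (hc₁ : c₁ = godelC1 t r φ u₀) (hc₂ : c₂ = godelC2 t r φ u₀) :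
    ∀ u : ℝ, deriv r u = c₁ * Real.sin (φ u) + c₂ * Real.cos (φ u) :=
  godel_rdot_formula_general t r φ z ht hr hφ hgeo u₀ c₁ c₂ hc₁ hc₂
end

section
/- Let t, r, φ, z : ℝ → ℝ be a geodesic of Gödel's universe, fix u₀ ∈ ℝ, and set c₁ = C₁(u₀), c₂ = C₂(u₀). Then the radial velocity is bounded: |r'(u)| ≤ √(c₁² + c₂²) for every u ∈ ℝ. -/
open Real

/-!
`C₁` and `C₂` are constants of motion: differentiating them and eliminating `t''`, `r''`, `φ''`
with the geodesic equations gives `0`. Moreover `C₂` is `C₁` with `φ` rotated by `π/2`, and the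
geodesic equations only see `φ'`, so it suffices to prove that `C₁` is conserved. Finally
`r' = sin φ · C₁ + cos φ · C₂`, and by Cauchy–Schwarz `|sin φ · c₁ + cos φ · c₂| ≤ √(c₁² + c₂²)`.
-/

theorem abs_sin_mul_add_cos_mul_le_sqrt (θ a b : ℝ) :
    |sin θ * a + cos θ * b| ≤ √(a ^ 2 + b ^ 2) := by
  apply abs_le_sqrt
  have lagrange : (sin θ * a + cos θ * b) ^ 2 + (sin θ * b - cos θ * a) ^ 2 = a ^ 2 + b ^ 2 := by
    linear_combination (a ^ 2 + b ^ 2) * sin_sq_add_cos_sq θ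
  nlinarith [sq_nonneg (sin θ * b - cos θ * a)]

theorem TwiceDiff.add_const {f : ℝ → ℝ} (hf : TwiceDiff f) (c : ℝ) :
    TwiceDiff (fun u => f u + c) := by
  refine ⟨hf.1.add_const c, ?_⟩
  rw [deriv_add_const']
  exact hf.2

section Geodesic

variable {t r φ z : ℝ → ℝ}

theorem GodelGeodesicEqns.add_const_angle (hgeo : GodelGeodesicEqns t r φ z) (α : ℝ) :
    GodelGeodesicEqns t r (fun u => φ u + α) z := by
  simpa only [GodelGeodesicEqns, deriv_add_const'] using hgeo

theorem GodelGeodesicEqns.t_eqn_mul_cosh (hgeo : GodelGeodesicEqns t r φ z) (u : ℝ) :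
    deriv (deriv t) u * cosh (r u) + 4 * sinh (r u) * deriv t u * deriv r u
      + 2 * √2 * sinh (r u) ^ 3 * deriv φ u * deriv r u = 0 := by
  have h := (hgeo u).1
  have hcosh : cosh (r u) ≠ 0 := (cosh_pos (r u)).ne'
  rw [tanh_eq_sinh_div_cosh] at h
  field_simp at h
  linear_combination h

theorem godelC1_hasDerivAt_zero (ht : TwiceDiff t) (hr : TwiceDiff r) (hφ : TwiceDiff φ)
    (hgeo : GodelGeodesicEqns t r φ z) (u : ℝ) :
    HasDerivAt (godelC1 t r φ) 0 u := by
  have hφ' : HasDerivAt φ (deriv φ u) u := (hφ.1 u).hasDerivAt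
  have hφ'' : HasDerivAt (deriv φ) (deriv (deriv φ) u) u := (hφ.2 u).hasDerivAt
  have hr' : HasDerivAt r (deriv r u) u := (hr.1 u).hasDerivAt
  have hr'' : HasDerivAt (deriv r) (deriv (deriv r) u) u := (hr.2 u).hasDerivAt
  have ht'' : HasDerivAt (deriv t) (deriv (deriv t) u) u := (ht.2 u).hasDerivAt
  have h2r : HasDerivAt (fun x => 2 * r x) (2 * deriv r u) u := hr'.const_mul 2
  have H := ((((hφ'.cos.const_mul (-√2)).mul h2r.sinh).mul ht'').add (hφ'.sin.mul hr'')).sub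
    ((((hφ'.cos.mul (h2r.cosh.sub_const 2)).mul h2r.sinh).div_const 2).mul hφ'')
  refine H.congr_deriv (Eq.symm ?_)
  simp only [Pi.mul_apply]
  rw [sinh_two_mul, cosh_two_mul]
  obtain ⟨-, e_r, e_φ, -⟩ := hgeo u
  linear_combination
    (2 * √2 * sinh (r u) * cos (φ u)) * hgeo.t_eqn_mul_cosh u
    - sin (φ u) * e_r
    - cos (φ u) * (2 - cosh (r u) ^ 2 - sinh (r u) ^ 2) * e_φ
    - 4 * sinh (r u) ^ 4 * cos (φ u) * deriv r u * deriv φ u * sq_sqrt (zero_le_two : (0 : ℝ) ≤ 2)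
    + (cosh (r u) ^ 2 * cos (φ u) * deriv r u * deriv φ u
        + sinh (r u) * cosh (r u) * sin (φ u) * deriv φ u ^ 2
        + 7 * sinh (r u) ^ 2 * cos (φ u) * deriv r u * deriv φ u
        + 4 * √2 * cos (φ u) * deriv t u * deriv r u
        - 3 * cos (φ u) * deriv r u * deriv φ u) * cosh_sq_sub_sinh_sq (r u)

theorem godelC1_eq_of_geodesic (ht : TwiceDiff t) (hr : TwiceDiff r) (hφ : TwiceDiff φ)
    (hgeo : GodelGeodesicEqns t r φ z) (u v : ℝ) :
    godelC1 t r φ u = godelC1 t r φ v :=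
  is_const_of_deriv_eq_zero (fun x => (godelC1_hasDerivAt_zero ht hr hφ hgeo x).differentiableAt)
    (fun x => (godelC1_hasDerivAt_zero ht hr hφ hgeo x).deriv) u v

end Geodesic

theorem godelC2_eq_godelC1_add_pi_div_two (t r φ : ℝ → ℝ) :
    godelC2 t r φ = godelC1 t r (fun u => φ u + π / 2) := by
  ext u
  simp only [godelC1, godelC2, deriv_add_const', cos_add_pi_div_two, sin_add_pi_div_two]
  ring

theorem sin_mul_godelC1_add_cos_mul_godelC2 (t r φ : ℝ → ℝ) (u : ℝ) :
    sin (φ u) * godelC1 t r φ u + cos (φ u) * godelC2 t r φ u = deriv r u := by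
  unfold godelC1 godelC2
  linear_combination deriv r u * sin_sq_add_cos_sq (φ u)

theorem godel_rdot_bounded_general (t r φ z : ℝ → ℝ)
    (ht : TwiceDiff t) (hr : TwiceDiff r) (hφ : TwiceDiff φ)
    (hgeo : GodelGeodesicEqns t r φ z)
    (u₀ : ℝ) (c₁ c₂ : ℝ)
    (hc₁ : c₁ = godelC1 t r φ u₀) (hc₂ : c₂ = godelC2 t r φ u₀) :
    ∀ u : ℝ, |deriv r u| ≤ Real.sqrt (c₁ ^ 2 + c₂ ^ 2) := by
  intro u
  have hC₁ : godelC1 t r φ u = c₁ := hc₁ ▸ godelC1_eq_of_geodesic ht hr hφ hgeo u u₀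
  have hC₂ : godelC2 t r φ u = c₂ := by
    rw [hc₂, godelC2_eq_godelC1_add_pi_div_two]
    exact godelC1_eq_of_geodesic ht hr (hφ.add_const _) (hgeo.add_const_angle _) u u₀
  rw [← sin_mul_godelC1_add_cos_mul_godelC2, hC₁, hC₂]
  exact abs_sin_mul_add_cos_mul_le_sqrt (φ u) c₁ c₂

/-- Along a geodesic, the radial velocity is bounded:
`|r'| ≤ √(c₁² + c₂²)` with `c₁ = C₁(u₀)`, `c₂ = C₂(u₀)`. -/
theorem godel_rdot_bounded (t r φ z : ℝ → ℝ)
    (ht : TwiceDiff t) (hr : TwiceDiff r) (hφ : TwiceDiff φ) (hz : TwiceDiff z)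
    (hrpos : ∀ u, 0 < r u)
    (hgeo : GodelGeodesicEqns t r φ z)
    (u₀ : ℝ) (c₁ c₂ : ℝ)
    (hc₁ : c₁ = godelC1 t r φ u₀) (hc₂ : c₂ = godelC2 t r φ u₀) :
    ∀ u : ℝ, |deriv r u| ≤ Real.sqrt (c₁ ^ 2 + c₂ ^ 2) :=
  godel_rdot_bounded_general t r φ z ht hr hφ hgeo u₀ c₁ c₂ hc₁ hc₂
end

section
/- Let f : ℝ → ℝ be twice differentiable. Then f satisfies the differential equation 2·cosh(2r)·f'(r) = sinh(2r)·f''(r) for all r > 0 if and only if there exist real constants ρ₁, ρ₂ such that f(r) = ρ₂ + (ρ₁/2)·cosh(r)² for all r > 0. -/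
open Real

/-!
On `(0, ∞)` the function `sinh (2 r)` does not vanish, and the equation says exactly that the
Wronskian of `f'` and `sinh (2 r)` vanishes there, i.e. that `f' / sinh (2 r)` is constant.
Since `sinh (2 r) = (cosh² r)'`, this means `f = c cosh² r + a` on `(0, ∞)`.
-/

open Set

section
variable {𝕜 : Type*} [RCLike 𝕜] {s : Set 𝕜}

theorem IsOpen.exists_eqOn_const_mul_iff_deriv_mul_eq (hs : IsOpen s) (hs' : IsPreconnected s)
    {g h : 𝕜 → 𝕜} (hg : DifferentiableOn 𝕜 g s) (hh : DifferentiableOn 𝕜 h s)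
    (h₀ : ∀ x ∈ s, h x ≠ 0) :
    (∃ c, EqOn g (fun x => c * h x) s) ↔
      EqOn (fun x => deriv g x * h x) (fun x => g x * deriv h x) s := by
  constructor
  · rintro ⟨c, hc⟩ x hx
    have hgx : deriv g x = c * deriv h x := by
      rw [(hc.eventuallyEq_of_mem (hs.mem_nhds hx)).deriv_eq,
        deriv_const_mul c (hh.differentiableAt (hs.mem_nhds hx))]
    simp only [hgx, hc hx]
    ring
  · intro hW
    have hquot : ∀ x ∈ s, HasDerivAt (fun x => g x / h x) 0 x := fun x hx => by
      have := (hg.differentiableAt (hs.mem_nhds hx)).hasDerivAt.div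
        (hh.differentiableAt (hs.mem_nhds hx)).hasDerivAt (h₀ x hx)
      exact this.congr_deriv (by simp [show deriv g x * h x = g x * deriv h x from hW hx])
    obtain ⟨c, hc⟩ := hs.exists_is_const_of_deriv_eq_zero hs'
      (fun x hx => (hquot x hx).differentiableAt.differentiableWithinAt)
      (fun x hx => (hquot x hx).deriv)
    exact ⟨c, fun x hx => (div_eq_iff (h₀ x hx)).1 (hc x hx)⟩

theorem IsOpen.exists_deriv_eqOn_const_mul_iff (hs : IsOpen s) (hs' : IsPreconnected s)
    {f h : 𝕜 → 𝕜} (hf : DifferentiableOn 𝕜 f s) (hh : DifferentiableOn 𝕜 h s) :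
    (∃ c, EqOn (deriv f) (fun x => c * deriv h x) s) ↔
      ∃ c a, EqOn f (fun x => c * h x + a) s := by
  have hderiv : ∀ c, EqOn (deriv fun x => c * h x) (fun x => c * deriv h x) s := fun c x hx =>
    deriv_const_mul c (hh.differentiableAt (hs.mem_nhds hx))
  constructor
  · rintro ⟨c, hc⟩
    obtain ⟨a, ha⟩ := hs.exists_eq_add_of_deriv_eq hs' hf (hh.const_mul c)
      (fun x hx => (hc hx).trans (hderiv c hx).symm)
    exact ⟨c, a, ha⟩
  · rintro ⟨c, a, hc⟩
    refine ⟨c, fun x hx => ?_⟩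
    rw [(hc.eventuallyEq_of_mem (hs.mem_nhds hx)).deriv_eq, deriv_add_const]
    exact hderiv c hx

end

namespace Real

theorem hasDerivAt_sinh_two_mul (x : ℝ) :
    HasDerivAt (fun r => sinh (2 * r)) (2 * cosh (2 * x)) x := by
  simpa [mul_comm] using ((hasDerivAt_id x).const_mul 2).sinh

theorem hasDerivAt_cosh_sq (x : ℝ) : HasDerivAt (fun r => cosh r ^ 2) (sinh (2 * x)) x :=
  ((hasDerivAt_cosh x).pow 2).congr_deriv (by rw [sinh_two_mul]; push_cast; ring)

end Real

/-- A twice-differentiable `f` satisfies `2·cosh(2r)·f' = sinh(2r)·f''`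
for all `r > 0` iff `f(r) = ρ₂ + (ρ₁/2)·cosh(r)²` on `(0,∞)` for some constants. -/
theorem godel_fstar_ode (f : ℝ → ℝ) (hf : TwiceDiff f) :
    (∀ r : ℝ, 0 < r →
        2 * Real.cosh (2 * r) * deriv f r = Real.sinh (2 * r) * deriv (deriv f) r)
      ↔ (∃ ρ₁ ρ₂ : ℝ, ∀ r : ℝ, 0 < r → f r = ρ₂ + ρ₁ / 2 * Real.cosh r ^ 2) := by
  obtain ⟨hf₁, hf₂⟩ := hf
  have hsinh_ne : ∀ r ∈ Ioi (0 : ℝ), sinh (2 * r) ≠ 0 := fun r hr =>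
    (sinh_pos_iff.2 (by simpa using hr)).ne'
  calc (∀ r : ℝ, 0 < r → 2 * cosh (2 * r) * deriv f r = sinh (2 * r) * deriv (deriv f) r)
      ↔ EqOn (fun r => deriv (deriv f) r * sinh (2 * r))
          (fun r => deriv f r * deriv (fun r => sinh (2 * r)) r) (Ioi 0) := by
        simp only [EqOn, mem_Ioi, (hasDerivAt_sinh_two_mul _).deriv]
        exact forall₂_congr fun r _ => by constructor <;> intro h <;> linear_combination -h
    _ ↔ ∃ c, EqOn (deriv f) (fun r => c * sinh (2 * r)) (Ioi 0) :=
        (isOpen_Ioi.exists_eqOn_const_mul_iff_deriv_mul_eq isPreconnected_Ioi hf₂.differentiableOn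
          (fun r _ => (hasDerivAt_sinh_two_mul r).differentiableAt.differentiableWithinAt)
          hsinh_ne).symm
    _ ↔ ∃ c, EqOn (deriv f) (fun r => c * deriv (fun r => cosh r ^ 2) r) (Ioi 0) := by
        simp only [(hasDerivAt_cosh_sq _).deriv]
    _ ↔ ∃ c a, EqOn f (fun r => c * cosh r ^ 2 + a) (Ioi 0) :=
        isOpen_Ioi.exists_deriv_eqOn_const_mul_iff isPreconnected_Ioi hf₁.differentiableOn
          (fun r _ => (hasDerivAt_cosh_sq r).differentiableAt.differentiableWithinAt)
    _ ↔ ∃ ρ₁ ρ₂ : ℝ, ∀ r : ℝ, 0 < r → f r = ρ₂ + ρ₁ / 2 * cosh r ^ 2 := by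
        constructor
        · rintro ⟨c, a, h⟩
          exact ⟨2 * c, a, fun r hr => by rw [h hr]; ring⟩
        · rintro ⟨ρ₁, ρ₂, h⟩
          exact ⟨ρ₁ / 2, ρ₂, fun r (hr : 0 < r) => by rw [h r hr]; ring⟩
end

section
/- For real constants ρ₁, ρ₂, define f*(r) = ρ₂ + (ρ₁/2)·cosh(r)² and g*(r) = (ρ₁ + 8ρ₂ + ρ₁·cosh(2r))·sinh(r)²/(4√2). Then for all r > 0 the pair (f*, g*) satisfies the coupled system: f*'(r) = −4√2·g*(r)/sinh(2r) + 4·f*(r)·tanh(r), and g*'(r) = 4·(g*(r) + √2·f*(r)·sinh(r)⁴)/sinh(2r). -/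
open Real

/-- The radial profile function `f*`. -/
noncomputable def fstar (ρ₁ ρ₂ : ℝ) (r : ℝ) : ℝ :=
  ρ₂ + ρ₁ / 2 * Real.cosh r ^ 2

/-- The radial profile function `g*`. -/
noncomputable def gstar (ρ₁ ρ₂ : ℝ) (r : ℝ) : ℝ :=
  (ρ₁ + 8 * ρ₂ + ρ₁ * Real.cosh (2 * r)) * Real.sinh r ^ 2 / (4 * Real.sqrt 2)

/-! Via `cosh 2r = 1 + 2 sinh² r`, both `f*` and `g*` become polynomials in `sinh r`, `cosh r`
and `√2`; after `sinh 2r = 2 sinh r cosh r` and clearing denominators, each equation is a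
polynomial identity modulo `cosh² r = 1 + sinh² r` and `√2² = 2`. -/

theorem gstar_eq_sinh_sq (ρ₁ ρ₂ r : ℝ) :
    gstar ρ₁ ρ₂ r = (ρ₁ + 4 * ρ₂ + ρ₁ * sinh r ^ 2) * sinh r ^ 2 / (2 * √2) := by
  rw [gstar, cosh_two_mul, cosh_sq']
  field_simp
  ring

theorem hasDerivAt_fstar (ρ₁ ρ₂ r : ℝ) :
    HasDerivAt (fstar ρ₁ ρ₂) (ρ₁ * cosh r * sinh r) r :=
  ((((hasDerivAt_cosh r).pow 2).const_mul (ρ₁ / 2)).const_add ρ₂).congr_deriv (by ring)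

theorem hasDerivAt_gstar (ρ₁ ρ₂ r : ℝ) :
    HasDerivAt (gstar ρ₁ ρ₂) (sinh r * cosh r * (ρ₁ + 4 * ρ₂ + 2 * ρ₁ * sinh r ^ 2) / √2) r := by
  have hsq : HasDerivAt (fun x => sinh x ^ 2) (2 * sinh r * cosh r) r :=
    ((hasDerivAt_sinh r).pow 2).congr_deriv (by ring)
  rw [funext (gstar_eq_sinh_sq ρ₁ ρ₂)]
  refine ((((hsq.const_mul ρ₁).const_add (ρ₁ + 4 * ρ₂)).mul hsq).div_const (2 * √2)).congr_deriv ?_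
  field_simp
  ring

/-- The pair `(f*, g*)` satisfies the coupled radial system. -/
theorem godel_fstar_gstar_system (ρ₁ ρ₂ : ℝ) :
    ∀ r : ℝ, 0 < r →
      (deriv (fstar ρ₁ ρ₂) r
          = -(4 * Real.sqrt 2) * gstar ρ₁ ρ₂ r / Real.sinh (2 * r)
            + 4 * fstar ρ₁ ρ₂ r * Real.tanh r)
      ∧ (deriv (gstar ρ₁ ρ₂) r
          = 4 * (gstar ρ₁ ρ₂ r + Real.sqrt 2 * fstar ρ₁ ρ₂ r * Real.sinh r ^ 4)
              / Real.sinh (2 * r)) := by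
  intro r hr
  have hs : sinh r ≠ 0 := (sinh_pos_iff.mpr hr).ne'
  have hc : cosh r ≠ 0 := (cosh_pos r).ne'
  have hc2 : cosh r ^ 2 = 1 + sinh r ^ 2 := cosh_sq' r
  have h2 : √2 ^ 2 = 2 := sq_sqrt zero_le_two
  rw [(hasDerivAt_fstar ρ₁ ρ₂ r).deriv, (hasDerivAt_gstar ρ₁ ρ₂ r).deriv, gstar_eq_sinh_sq, fstar,
    sinh_two_mul, tanh_eq_sinh_div_cosh]
  constructor
  · field_simp
    linear_combination (-4 * ρ₁) * hc2
  · field_simp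
    linear_combination (4 * ρ₁ + 16 * ρ₂) * hc2
      + (-4 * cosh r ^ 2 * ρ₁ * sinh r ^ 2 - 8 * ρ₂ * sinh r ^ 2) * h2
end
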